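/- arXiv:1801.05145 — 3 statements merged into one kernel-verified Lean document; each statement's English description precedes it below -/
import Mathlib

section
/- The matrix-product form of mutation agrees with the entrywise formula: with E and F defined from B̃ and k as below, the matrix E·B̃·F has entries (E B̃ F)_{ij} = −b_{ij} if i = k or j = k, and (E B̃ F)_{ij} = b_{ij} + (−1)^{δ(b_{ik}<0)} max(b_{ik} b_{kj}, 0) otherwise. -/
/-!
`E` is the identity with column `k` replaced and `F` the identity with row `k` replaced, so
`E·B̃` negates row `k` and adds `max(0, -b_ik)` times row `k` to row `i`, and `·F` does the
same to columns with the weights `max(0, b_kj)`. Since `b_kk = 0`, for `i, j ≠ k` the two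
corrections combine to `max(0, -a)·c + a·max(0, c) = ±max(ac, 0)` with `a = b_ik`, `c = b_kj`.
-/

open Finset

section ElementaryMatrices

variable {K R : Type*} [DecidableEq K] [CommRing R] (k : K)

theorem sum_identity_updateCol_mul [Fintype K] (c : K → R) (E : K → K → R)
    (hE : ∀ i u, E i u = if u ≠ k then (if i = u then 1 else 0) else if i = k then -1 else c i)
    (x : K → R) (i : K) :
    ∑ u, E i u * x u = if i = k then -x k else x i + c i * x k := by
  rw [← add_sum_erase _ _ (mem_univ k), hE, if_neg (not_not.2 rfl)]
  have hrest : ∑ u ∈ univ.erase k, E i u * x u = if i = k then 0 else x i := by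
    rw [sum_congr rfl fun u hu => by rw [hE, if_pos (ne_of_mem_erase hu)]]
    simp [ite_mul, sum_ite_eq, mem_erase]
  split_ifs at hrest ⊢ with hi <;> rw [hrest] <;> ring

theorem sum_mul_identity_updateRow (s : Finset K) (hk : k ∈ s) (r : K → R) (F : K → K → R)
    (hF : ∀ w j, F w j = if w ≠ k then (if w = j then 1 else 0) else if j = k then -1 else r j)
    (y : K → R) {j : K} (hj : j ∈ s) :
    ∑ w ∈ s, y w * F w j = if j = k then -y k else y j + y k * r j := by
  rw [← add_sum_erase _ _ hk, hF, if_neg (not_not.2 rfl)]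
  have hrest : ∑ w ∈ s.erase k, y w * F w j = if j = k then 0 else y j := by
    rw [sum_congr rfl fun w hw => by rw [hF, if_pos (ne_of_mem_erase hw)]]
    simp [mul_ite, sum_ite_eq', mem_erase, hj, eq_comm (a := j)]
  split_ifs at hrest ⊢ with hjk <;> rw [hrest] <;> ring

end ElementaryMatrices

theorem max_neg_mul_add_mul_max {R : Type*} [CommRing R] [LinearOrder R] [IsStrictOrderedRing R]
    (a c : R) :
    max 0 (-a) * c + a * max 0 c = (if a < 0 then -1 else 1) * max (a * c) 0 := by
  rcases lt_or_ge a 0 with ha | ha <;> rcases le_or_gt c 0 with hc | hc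
  · rw [if_pos ha, max_eq_right (by linarith), max_eq_left hc, max_eq_left (by nlinarith)]
    ring
  · rw [if_pos ha, max_eq_right (by linarith), max_eq_right hc.le, max_eq_right (by nlinarith)]
    ring
  · rw [if_neg (not_lt.2 ha), max_eq_left (by linarith), max_eq_left hc, max_eq_right (by nlinarith)]
    ring
  · rw [if_neg (not_lt.2 ha), max_eq_left (by linarith), max_eq_right hc.le, max_eq_left (by nlinarith)]
    ring

/-- the matrix-product form of mutation `E·B̃·F` agrees with the
entrywise mutation formula. -/
theorem mutation_matrix_form {K : Type*} [Fintype K] [DecidableEq K] (ex : Finset K)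
    (B : K → K → ℤ) (k : K) (hk : k ∈ ex)
    (hskew : ∀ i ∈ ex, ∀ j ∈ ex, B i j = - B j i)
    (E F : K → K → ℤ)
    (hE : ∀ i j, E i j = if j ≠ k then (if i = j then 1 else 0)
        else if i = k then -1 else max 0 (- B i k))
    (hF : ∀ i j, F i j = if i ≠ k then (if i = j then 1 else 0)
        else if j = k then -1 else max 0 (B k j)) :
    ∀ (i : K), ∀ j ∈ ex,
      (∑ u : K, ∑ w ∈ ex, E i u * B u w * F w j)
        = if i = k ∨ j = k then - B i j
          else B i j + (if B i k < 0 then -1 else 1) * max (B i k * B k j) 0 := by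
  intro i j hj
  have hkk : B k k = 0 := by linarith [hskew k hk k hk]
  rw [sum_comm]
  simp_rw [← sum_mul, sum_identity_updateCol_mul k (fun i => max 0 (-B i k)) E hE]
  rw [sum_mul_identity_updateRow k ex hk (fun j => max 0 (B k j)) F hF _ hj]
  by_cases hi : i = k <;> by_cases hjk : j = k
  · subst hi hjk; simp [hkk]
  · subst hi; simp [hjk, hkk]
  · subst hjk; simp [hi, hkk]
  · simp only [hi, hjk, if_false, or_self, hkk, mul_zero, add_zero]
    rw [← max_neg_mul_add_mul_max]
    ring
end

section
/- Mutation preserves compatibility: if (L, B̃) is a compatible pair with Σ_{t∈K} λ_{it} b_{tj} = δ_{ij} d for all i ∈ K, j ∈ K_ex, then the mutated pair (μ_k(L), μ_k(B̃)) := ((E^T) L E, E B̃ F) is again compatible with the same integer d, i.e. Σ_{t∈K} μ_k(L)_{it} μ_k(B̃)_{tj} = δ_{ij} d for all i ∈ K, j ∈ K_ex. -/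
/-!
Since `E` agrees with the identity off column `k` and `E k k = -1`, it is an involution, so
`(EᵀLE)(EB̃F) = Eᵀ(LB̃)F`. Compatibility turns `LB̃` into `d` times the identity on the exchangeable
columns, and skew-symmetry of the principal part of `B̃` gives `F = Eᵀ` on `K_ex × K_ex`, while
`E` has no entries from an exchangeable row into a frozen column; hence `EᵀF` restricted to
`K_ex` is again the identity (it is `(E E)ᵀ`), and the product is `d` times the identity.
-/

open Finset Matrix

namespace Matrix

variable {n R : Type*} [Fintype n] [DecidableEq n] [Ring R]

theorem updateCol_one_mul_self {k : n} {c : n → R} (hc : c k = -1) :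
    updateCol (1 : Matrix n n R) k c * updateCol 1 k c = 1 := by
  ext r q
  rw [mul_apply, one_apply]
  by_cases hq : q = k
  · subst hq
    rw [← add_sum_erase _ _ (mem_univ q)]
    have hrest : ∑ u ∈ univ.erase q, updateCol (1 : Matrix n n R) q c r u * c u =
        if r = q then 0 else c r := by
      rw [sum_congr rfl fun u hu => by rw [updateCol_ne (ne_of_mem_erase hu), one_apply]]
      simp only [ite_mul, one_mul, zero_mul, sum_ite_eq, mem_erase, mem_univ, and_true]
      split_ifs <;> simp_all
    simp only [updateCol_self, hc, hrest]
    split_ifs with h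
    · subst h; simp [hc]
    · simp
  · simp [updateCol_ne hq, one_apply]

end Matrix

section Compatibility

variable {K R : Type*} [Fintype K] [DecidableEq K] [CommRing R]

def IsCompatible (ex : Finset K) (L B : K → K → R) (d : R) : Prop :=
  ∀ i, ∀ j ∈ ex, ∑ u, L i u * B u j = if i = j then d else 0

theorem IsCompatible.conj_mul {ex : Finset K} {L B E F : K → K → R} {d : R}
    (hLB : IsCompatible ex L B d) (hE : Matrix.of E * Matrix.of E = 1)
    (hEF : ∀ i, ∀ j ∈ ex, ∑ w ∈ ex, E w i * F w j = if i = j then 1 else 0) :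
    IsCompatible ex (fun i u => ∑ p, ∑ r, E p i * L p r * E r u)
      (fun u j => ∑ p, ∑ w ∈ ex, E u p * B p w * F w j) d := by
  intro i j hj
  let N : Matrix K K R := Matrix.of fun q j => ∑ w ∈ ex, B q w * F w j
  have hLN : ∀ p, (Matrix.of L * N) p j = if p ∈ ex then d * F p j else 0 := fun p => by
    simp only [N, mul_apply, of_apply, mul_sum, ← mul_assoc]
    rw [sum_comm, ← sum_ite_eq ex p fun w => d * F w j]
    refine sum_congr rfl fun w hw => ?_
    rw [← sum_mul, hLB p w hw, ite_mul, zero_mul]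
  calc ∑ u, (∑ p, ∑ r, E p i * L p r * E r u) * ∑ p, ∑ w ∈ ex, E u p * B p w * F w j
      = ((Matrix.of E)ᵀ * Matrix.of L * Matrix.of E * (Matrix.of E * N)) i j := by
        simp only [N, mul_apply, transpose_apply, of_apply, sum_mul, mul_sum, mul_assoc]
    _ = ((Matrix.of E)ᵀ * (Matrix.of L * N)) i j := by
        rw [Matrix.mul_assoc, ← Matrix.mul_assoc (Matrix.of E), hE, Matrix.one_mul,
          Matrix.mul_assoc]
    _ = d * ∑ w ∈ ex, E w i * F w j := by
        rw [mul_apply]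
        simp only [hLN, transpose_apply, of_apply, mul_ite, mul_zero]
        rw [← sum_filter, filter_mem_eq_inter, univ_inter, mul_sum]
        exact sum_congr rfl fun w _ => by ring
    _ = if i = j then d else 0 := by rw [hEF i j hj]; simp

end Compatibility

section Mutation

variable {K : Type*} [DecidableEq K] {ex : Finset K} {B E F : K → K → ℤ} {k : K}

def IsMutationMatrixE (B : K → K → ℤ) (k : K) (E : K → K → ℤ) : Prop :=
  ∀ i j, E i j = if j ≠ k then (if i = j then 1 else 0)
    else if i = k then -1 else max 0 (- B i k)

def IsMutationMatrixF (B : K → K → ℤ) (k : K) (F : K → K → ℤ) : Prop :=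
  ∀ i j, F i j = if i ≠ k then (if i = j then 1 else 0)
    else if j = k then -1 else max 0 (B k j)

namespace IsMutationMatrixE

theorem of_eq_updateCol (hE : IsMutationMatrixE B k E) :
    Matrix.of E = updateCol 1 k fun i => if i = k then -1 else max 0 (-B i k) := by
  ext i j
  by_cases hj : j = k
  · subst hj; simp [hE i]
  · simp [hE i, hj, updateCol_ne, one_apply]

theorem mul_self [Fintype K] (hE : IsMutationMatrixE B k E) :
    Matrix.of E * Matrix.of E = 1 := by
  rw [hE.of_eq_updateCol]
  exact updateCol_one_mul_self (by simp)

theorem apply_eq_zero (hE : IsMutationMatrixE B k E) (hk : k ∈ ex) {j w : K} (hj : j ∈ ex)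
    (hw : w ∉ ex) : E j w = 0 := by
  have hwk : w ≠ k := by rintro rfl; exact hw hk
  have hjw : j ≠ w := by rintro rfl; exact hw hj
  simp [hE j w, hwk, hjw]

end IsMutationMatrixE

namespace IsMutationMatrixF

theorem apply_eq_transpose (hF : IsMutationMatrixF B k F) (hE : IsMutationMatrixE B k E)
    (hk : k ∈ ex) (hBskew : ∀ i ∈ ex, ∀ j ∈ ex, B i j = - B j i) {w j : K} (hj : j ∈ ex) :
    F w j = E j w := by
  rw [hE, hF]
  by_cases hw : w = k
  · subst hw; simp [hBskew j hj w hk, eq_comm]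
  · simp [hw, eq_comm]

theorem sum_mutationMatrixE_mul [Fintype K] (hF : IsMutationMatrixF B k F)
    (hE : IsMutationMatrixE B k E) (hk : k ∈ ex) (hBskew : ∀ i ∈ ex, ∀ j ∈ ex, B i j = - B j i)
    (i : K) {j : K} (hj : j ∈ ex) :
    ∑ w ∈ ex, E w i * F w j = if i = j then 1 else 0 := by
  calc ∑ w ∈ ex, E w i * F w j = ∑ w ∈ ex, E j w * E w i :=
        sum_congr rfl fun w _ => by rw [hF.apply_eq_transpose hE hk hBskew hj, mul_comm]
    _ = ∑ w, E j w * E w i := sum_subset (subset_univ _) fun w _ hw => by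
        rw [hE.apply_eq_zero hk hj hw, zero_mul]
    _ = (Matrix.of E * Matrix.of E) j i := by simp [mul_apply]
    _ = if i = j then 1 else 0 := by simp [hE.mul_self, one_apply, eq_comm]

end IsMutationMatrixF

end Mutation

theorem mutation_preserves_compatibility_general {K : Type*} [Fintype K] [DecidableEq K]
    (ex : Finset K) (L B : K → K → ℤ) (d : ℤ) (k : K) (hk : k ∈ ex)
    (hBskew : ∀ i ∈ ex, ∀ j ∈ ex, B i j = - B j i)
    (hcompat : ∀ i : K, ∀ j ∈ ex, (∑ u : K, L i u * B u j) = if i = j then d else 0)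
    (E F : K → K → ℤ)
    (hE : ∀ i j, E i j = if j ≠ k then (if i = j then 1 else 0)
        else if i = k then -1 else max 0 (- B i k))
    (hF : ∀ i j, F i j = if i ≠ k then (if i = j then 1 else 0)
        else if j = k then -1 else max 0 (B k j)) :
    ∀ i : K, ∀ j ∈ ex,
      (∑ u : K, (∑ p : K, ∑ r : K, E p i * L p r * E r u)
          * (∑ p : K, ∑ w ∈ ex, E u p * B p w * F w j))
        = if i = j then d else 0 :=
  IsCompatible.conj_mul hcompat (IsMutationMatrixE.mul_self hE) fun _ _ hj =>
    IsMutationMatrixF.sum_mutationMatrixE_mul hF hE hk hBskew _ hj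

/-- mutation preserves compatibility.  If `Σ_t λ_{it} b_{tj} = δ_{ij} d`
for all `i ∈ K`, `j ∈ K_ex`, then the mutated pair `(μ_k(L), μ_k(B̃)) = ((Eᵀ)LE, EB̃F)`
satisfies the same compatibility relation with the same `d`. -/
theorem mutation_preserves_compatibility {K : Type*} [Fintype K] [DecidableEq K]
    (ex : Finset K) (L B : K → K → ℤ) (d : ℤ) (hd : 0 < d) (k : K) (hk : k ∈ ex)
    (hLskew : ∀ i j, L i j = - L j i)
    (hBskew : ∀ i ∈ ex, ∀ j ∈ ex, B i j = - B j i)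
    (hcompat : ∀ i : K, ∀ j ∈ ex, (∑ u : K, L i u * B u j) = if i = j then d else 0)
    (E F : K → K → ℤ)
    (hE : ∀ i j, E i j = if j ≠ k then (if i = j then 1 else 0)
        else if i = k then -1 else max 0 (- B i k))
    (hF : ∀ i j, F i j = if i ≠ k then (if i = j then 1 else 0)
        else if j = k then -1 else max 0 (B k j)) :
    ∀ i : K, ∀ j ∈ ex,
      (∑ u : K, (∑ p : K, ∑ r : K, E p i * L p r * E r u)
          * (∑ p : K, ∑ w ∈ ex, E u p * B p w * F w j))
        = if i = j then d else 0 :=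
  mutation_preserves_compatibility_general ex L B d k hk hBskew hcompat E F hE hF
end

section
/- In a quantum torus, the first mutated cluster variable q-commutes correctly with the unmutated variables: with x_k' := x^{a'} + x^{a''} (where a', a'' ∈ Z^K are given by a'_k = a''_k = −1, a'_i = max(0, b_{ik}) and a''_i = max(0, −b_{ik}) for i ≠ k), for every j ∈ K with j ≠ k one has x_j · x_k' = q^{μ_k(L)_{jk}} x_k' · x_j in the skew field of fractions, where μ_k(L)_{jk} = −λ_{jk} + Σ_{t∈K} max(0, −b_{tk}) λ_{jt}. -/
/-!
Each factor of the monomial `x^a` q-commutes with `x_j`, hence `x_j x^a = q^{⟨a, λ_j⟩} x^a x_j`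
with `⟨a, λ_j⟩ = ∑_t a_t λ_{jt}`; the renormalizing power of `q^{1/2}` is central. Since
`a' - a'' = b_{•k}` and `∑_t λ_{jt} b_{tk} = 0` for `j ≠ k` by compatibility, both monomials of
`x_k'` carry the same exponent `⟨a'', λ_j⟩ = μ_k(L)_{jk}`.
-/

/-- The exponent `∑_{i > j in the order given by the list} a i * a j * λ i j`
of the `q^{1/2}`-prefactor, computed along a list enumerating the index set. -/
def monoExp {K : Type*} (lam : K → K → ℤ) (a : K → ℤ) : List K → ℤ
  | [] => 0
  | i :: t => (t.map fun j => a j * a i * lam j i).sum + monoExp lam a t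

/-- The renormalized Laurent monomial `x^a` (for `a : K → ℤ`) with respect to the
total order given by the list `l`, where the unit `v` plays the role of `q^{1/2}`. -/
noncomputable def zmono {K A : Type*} [Ring A] (v : Aˣ) (lam : K → K → ℤ)
    (x : K → Aˣ) (a : K → ℤ) (l : List K) : A :=
  ((v ^ monoExp lam a l : Aˣ) : A) * (((l.map fun i => x i ^ a i).prod : Aˣ) : A)

section QCommute

variable {G : Type*} [Group G] {v : G}

theorem qcommute_zpow_right (hv : ∀ z, Commute v z) {w u : G} {c : ℤ}
    (h : w * u = v ^ c * (u * w)) (n : ℤ) :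
    w * u ^ n = v ^ (c * n) * (u ^ n * w) := by
  have hsemi : SemiconjBy w u (v ^ c * u) := by rw [SemiconjBy, h, mul_assoc]
  calc w * u ^ n = (v ^ c * u) ^ n * w := hsemi.zpow_right n
    _ = v ^ (c * n) * (u ^ n * w) := by
      rw [((hv u).zpow_left c).mul_zpow, ← zpow_mul, mul_assoc]

theorem qcommute_list_prod (hv : ∀ z, Commute v z) {ι : Type*} (w : G) (y : ι → G)
    (e : ι → ℤ) (h : ∀ i, w * y i = v ^ e i * (y i * w)) (l : List ι) :
    w * (l.map y).prod = v ^ (l.map e).sum * ((l.map y).prod * w) := by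
  induction l with
  | nil => simp
  | cons i t ih =>
    simp only [List.map_cons, List.prod_cons, List.sum_cons]
    calc w * (y i * (t.map y).prod)
        = v ^ e i * (y i * (w * (t.map y).prod)) := by
          rw [← mul_assoc, h, mul_assoc, mul_assoc]
      _ = v ^ e i * (v ^ (t.map e).sum * (y i * ((t.map y).prod * w))) := by
          rw [ih, ← ((hv (y i)).zpow_left _).left_comm]
      _ = v ^ (e i + (t.map e).sum) * (y i * (t.map y).prod * w) := by
          rw [zpow_add, mul_assoc, mul_assoc]

theorem qcommute_central_mul_right (hv : ∀ z, Commute v z) {w u : G} {c : ℤ}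
    (h : w * u = v ^ c * (u * w)) (m : ℤ) :
    w * (v ^ m * u) = v ^ c * ((v ^ m * u) * w) := by
  rw [← mul_assoc, ← ((hv w).zpow_left m).eq, mul_assoc, h, ((hv _).zpow_left m).left_comm,
    mul_assoc]

end QCommute

theorem zmono_qcommute {K A : Type*} [Ring A] {v : Aˣ} (hv : ∀ z, Commute v z)
    (lam : K → K → ℤ) (x : K → Aˣ) (j : K)
    (hx : ∀ i, x j * x i = v ^ (2 * lam j i) * (x i * x j)) (a : K → ℤ) (l : List K) :
    (x j : A) * zmono v lam x a l
      = ((v ^ (2 * (l.map fun i => a i * lam j i).sum) : Aˣ) : A)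
          * (zmono v lam x a l * x j) := by
  have hfactor (i : K) : x j * x i ^ a i = v ^ (2 * (a i * lam j i)) * (x i ^ a i * x j) := by
    rw [qcommute_zpow_right hv (hx i), mul_left_comm, mul_comm (a i)]
  have hprod := qcommute_list_prod hv (x j) _ _ hfactor l
  rw [List.sum_map_mul_left] at hprod
  have hmono := qcommute_central_mul_right hv hprod (monoExp lam a l)
  simp only [zmono]
  exact_mod_cast hmono

theorem List.sum_map_eq_sum_univ {K M : Type*} [Fintype K] [DecidableEq K] [AddCommMonoid M]
    {l : List K} (hl : l.Nodup) (hcov : ∀ i, i ∈ l) (f : K → M) :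
    (l.map f).sum = ∑ i, f i := by
  rw [← List.sum_toFinset f hl]
  congr
  exact Finset.eq_univ_iff_forall.mpr fun i => List.mem_toFinset.mpr (hcov i)

section MutationExponents

variable {K : Type*} [DecidableEq K] {b : K → ℤ} {k : K}

theorem sub_eq_of_eq_ite_max (hbk : b k = 0) {a' a'' : K → ℤ}
    (ha' : ∀ i, a' i = if i = k then -1 else max 0 (b i))
    (ha'' : ∀ i, a'' i = if i = k then -1 else max 0 (-b i)) (i : K) :
    a' i - a'' i = b i := by
  rw [ha', ha'']
  split_ifs with hik
  · rw [hik, hbk, sub_self]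
  · rcases le_total 0 (b i) with hb | hb <;> simp [hb]

theorem sum_mul_eq_of_eq_ite_max_neg [Fintype K] (hbk : b k = 0) {a'' : K → ℤ}
    (ha'' : ∀ i, a'' i = if i = k then -1 else max 0 (-b i)) (c : K → ℤ) :
    ∑ u, a'' u * c u = -c k + ∑ u, max 0 (-b u) * c u := by
  have hterm (u : K) : a'' u * c u = (if u = k then -c k else 0) + max 0 (-b u) * c u := by
    rw [ha'']
    split_ifs with huk
    · simp [huk, hbk]
    · simp
  simp only [hterm, Finset.sum_add_distrib, Finset.sum_ite_eq', Finset.mem_univ, if_true]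

end MutationExponents

theorem mutated_variable_qcommutes_general {K A : Type*} [Fintype K] [DecidableEq K] [Ring A]
    (ex : Finset K) (v : Aˣ) (lam B : K → K → ℤ) (d : ℤ)
    (x : K → Aˣ)
    (hBskew : ∀ i ∈ ex, ∀ j ∈ ex, B i j = - B j i)
    (hcentral : ∀ y : A, (v : A) * y = y * (v : A))
    (hrel : ∀ i j, (x i : A) * (x j : A)
        = ((v ^ (2 * lam i j) : Aˣ) : A) * ((x j : A) * (x i : A)))
    (hcompat : ∀ i : K, ∀ j ∈ ex, (∑ u : K, lam i u * B u j) = if i = j then d else 0)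
    (l : List K) (hl : l.Nodup) (hcov : ∀ i : K, i ∈ l)
    (k : K) (hk : k ∈ ex)
    (a' a'' : K → ℤ)
    (ha' : ∀ i, a' i = if i = k then -1 else max 0 (B i k))
    (ha'' : ∀ i, a'' i = if i = k then -1 else max 0 (- B i k))
    (xk' : A) (hxk' : xk' = zmono v lam x a' l + zmono v lam x a'' l)
    (j : K) (hj : j ≠ k) :
    (x j : A) * xk'
      = ((v ^ (2 * (- lam j k + ∑ u : K, max 0 (- B u k) * lam j u)) : Aˣ) : A)
          * (xk' * (x j : A)) := by
  have hv (z : Aˣ) : Commute v z := Units.ext (by simpa using hcentral z)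
  have hx (i : K) : x j * x i = v ^ (2 * lam j i) * (x i * x j) :=
    Units.ext (by simpa using hrel j i)
  have hBkk : B k k = 0 := by linarith [hBskew k hk k hk]
  have horth : ∑ u, (a' u - a'' u) * lam j u = 0 := by
    simp only [sub_eq_of_eq_ite_max (b := fun u => B u k) hBkk ha' ha'', mul_comm (B _ k)]
    simpa [hj] using hcompat j k hk
  have hsame : ∑ u, a' u * lam j u = ∑ u, a'' u * lam j u := by
    simpa [sub_mul, sub_eq_zero] using horth
  rw [hxk', mul_add, zmono_qcommute hv lam x j hx, zmono_qcommute hv lam x j hx,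
    List.sum_map_eq_sum_univ hl hcov, List.sum_map_eq_sum_univ hl hcov, hsame,
    sum_mul_eq_of_eq_ite_max_neg (b := fun u => B u k) hBkk ha'', ← mul_add, ← add_mul]

/-- the first mutated cluster variable `x_k' = x^{a'} + x^{a''}`
q-commutes with the unmutated variables:
`x_j x_k' = q^{μ_k(L)_{jk}} x_k' x_j` for `j ≠ k`, where
`μ_k(L)_{jk} = −λ_{jk} + Σ_t max(0, −b_{tk}) λ_{jt}`. -/
theorem mutated_variable_qcommutes {K A : Type*} [Fintype K] [DecidableEq K] [Ring A]
    (ex : Finset K) (v : Aˣ) (lam B : K → K → ℤ) (d : ℤ) (hd : 0 < d)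
    (x : K → Aˣ)
    (hskew : ∀ i j, lam i j = - lam j i)
    (hBskew : ∀ i ∈ ex, ∀ j ∈ ex, B i j = - B j i)
    (hcentral : ∀ y : A, (v : A) * y = y * (v : A))
    (hrel : ∀ i j, (x i : A) * (x j : A)
        = ((v ^ (2 * lam i j) : Aˣ) : A) * ((x j : A) * (x i : A)))
    (hcompat : ∀ i : K, ∀ j ∈ ex, (∑ u : K, lam i u * B u j) = if i = j then d else 0)
    (l : List K) (hl : l.Nodup) (hcov : ∀ i : K, i ∈ l)
    (k : K) (hk : k ∈ ex)
    (a' a'' : K → ℤ)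
    (ha' : ∀ i, a' i = if i = k then -1 else max 0 (B i k))
    (ha'' : ∀ i, a'' i = if i = k then -1 else max 0 (- B i k))
    (xk' : A) (hxk' : xk' = zmono v lam x a' l + zmono v lam x a'' l)
    (j : K) (hj : j ≠ k) :
    (x j : A) * xk'
      = ((v ^ (2 * (- lam j k + ∑ u : K, max 0 (- B u k) * lam j u)) : Aˣ) : A)
          * (xk' * (x j : A)) :=
  mutated_variable_qcommutes_general ex v lam B d x hBskew hcentral hrel hcompat l hl hcov k hk a'
    a'' ha' ha'' xk' hxk' j hj
end
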